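/- arXiv:2502.08035 — 4 statements merged into one kernel-verified Lean document; each statement's English description precedes it below -/
import Mathlib

section
/- Let α > 0, c ≥ 0 with 4(α+1)c ≤ 1, f(η) = (αη² + c)/(1 − η), and let γ∞ be the smaller root of (α+1)η² − η + c = 0. If a sequence (η_k) of nonnegative reals satisfies η_{k+1} ≤ f(η_k) for all k and η₀ < γ₀ (the larger root), then limsup_{k→∞} η_k ≤ γ∞. -/
/-!
Since `f(η) - η = ((α+1)η² - η + c)/(1 - η)`, the map `f` lies below the diagonal exactly between
the roots `γ∞ ≤ γ₀ < 1`, and it is monotone on `[0, 1)`. Hence `f` maps `[0, M]`, with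
`M = max η₀ γ∞`, into itself, and `η` is dominated by the orbit `f^[k] M`. That orbit decreases,
so it converges, and by continuity its limit is a fixed point of `f` in `[0, M]`: a root of
`(α+1)η² - η + c` which, as `η₀ < γ₀`, cannot exceed `γ∞`.
-/

open Filter Function Set Topology

section IterateOfMonotoneOn

variable {β : Type*} [Preorder β] {g : β → β}

theorem MonotoneOn.antitone_iterate_of_map_le {s : Set β} (hg : MonotoneOn g s)
    (hs : MapsTo g s s) {x : β} (hx : x ∈ s) (hgx : g x ≤ x) : Antitone fun n => g^[n] x := by
  refine antitone_nat_of_succ_le fun n => ?_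
  induction n with
  | zero => exact hgx
  | succ n ih =>
    have := hg (hs.iterate _ hx) (hs.iterate _ hx) ih
    rwa [← iterate_succ_apply' g n, ← iterate_succ_apply' g (n + 1)] at this

theorem MonotoneOn.le_iterate_of_le_map {a b : β} (hg : MonotoneOn g (Icc a b))
    (hs : MapsTo g (Icc a b) (Icc a b)) {u : ℕ → β} (hua : ∀ n, a ≤ u n)
    (hu : ∀ n, u (n + 1) ≤ g (u n)) {x : β} (hx : x ∈ Icc a b) (h0 : u 0 ≤ x) (n : ℕ) :
    u n ≤ g^[n] x := by
  induction n with
  | zero => exact h0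
  | succ n ih =>
    have hxn := hs.iterate n hx
    rw [iterate_succ_apply']
    exact (hu n).trans (hg ⟨hua n, ih.trans hxn.2⟩ hxn ih)

end IterateOfMonotoneOn

section RealIterate

variable {g : ℝ → ℝ} {a b : ℝ}

theorem MonotoneOn.exists_isFixedPt_tendsto_iterate (hg : MonotoneOn g (Icc a b))
    (hs : MapsTo g (Icc a b) (Icc a b)) (hcont : ∀ y ∈ Icc a b, ContinuousAt g y) {x : ℝ}
    (hx : x ∈ Icc a b) (hgx : g x ≤ x) :
    ∃ L ∈ Icc a b, IsFixedPt g L ∧ Tendsto (fun n => g^[n] x) atTop (𝓝 L) := by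
  have hmem : ∀ n, g^[n] x ∈ Icc a b := fun n => hs.iterate n hx
  have hlim := tendsto_atTop_ciInf (hg.antitone_iterate_of_map_le hs hx hgx)
    ⟨a, forall_mem_range.2 fun n => (hmem n).1⟩
  have hL := isClosed_Icc.mem_of_tendsto hlim (Eventually.of_forall hmem)
  exact ⟨_, hL, isFixedPt_of_tendsto_iterate hlim (hcont _ hL), hlim⟩

theorem MonotoneOn.limsup_le_of_le_map (hg : MonotoneOn g (Icc a b))
    (hcont : ∀ y ∈ Icc a b, ContinuousAt g y) (ha : a ≤ g a) (hb : g b ≤ b) {r : ℝ}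
    (hfix : ∀ L ∈ Icc a b, IsFixedPt g L → L ≤ r) {u : ℕ → ℝ} (hua : ∀ n, a ≤ u n)
    (hu : ∀ n, u (n + 1) ≤ g (u n)) (h0 : u 0 ≤ b) : limsup u atTop ≤ r := by
  have hs := hg.mapsTo_Icc.mono_right (Icc_subset_Icc ha hb)
  have hb_mem : b ∈ Icc a b := ⟨(hua 0).trans h0, le_rfl⟩
  obtain ⟨L, hL, hfixL, hlim⟩ := hg.exists_isFixedPt_tendsto_iterate hs hcont hb_mem hb
  calc limsup u atTop ≤ limsup (fun n => g^[n] b) atTop :=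
        limsup_le_limsup (Eventually.of_forall (hg.le_iterate_of_le_map hs hua hu hb_mem h0))
          (isCoboundedUnder_le_of_le atTop hua) hlim.isBoundedUnder_le
    _ = L := hlim.limsup_eq
    _ ≤ r := hfix L hL hfixL

end RealIterate

theorem mul_sq_sub_add_eq_mul_sub_mul_sub {A c : ℝ} (hA : A ≠ 0) (hD : 0 ≤ 1 - 4 * A * c)
    (x : ℝ) :
    A * x ^ 2 - x + c = A * (x - (1 - √(1 - 4 * A * c)) / (2 * A)) *
      (x - (1 + √(1 - 4 * A * c)) / (2 * A)) := by
  have hs := Real.sq_sqrt hD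
  set s := √(1 - 4 * A * c)
  field_simp
  linear_combination hs

noncomputable def pgdMap (α c η : ℝ) : ℝ := (α * η ^ 2 + c) / (1 - η)

section PgdMap

variable {α c x : ℝ}

theorem pgdMap_sub_self (hx : x ≠ 1) :
    pgdMap α c x - x = ((α + 1) * x ^ 2 - x + c) / (1 - x) := by
  have : 1 - x ≠ 0 := sub_ne_zero.2 hx.symm
  unfold pgdMap
  field_simp
  ring

theorem pgdMap_le_self_iff (hx : x < 1) :
    pgdMap α c x ≤ x ↔ (α + 1) * x ^ 2 - x + c ≤ 0 := by
  rw [← sub_nonpos, pgdMap_sub_self hx.ne, div_le_iff₀ (sub_pos.2 hx), zero_mul]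

theorem pgdMap_isFixedPt_iff (hx : x < 1) :
    IsFixedPt (pgdMap α c) x ↔ (α + 1) * x ^ 2 - x + c = 0 := by
  rw [IsFixedPt, ← sub_eq_zero, pgdMap_sub_self hx.ne, div_eq_zero_iff,
    or_iff_left (sub_pos.2 hx).ne']

theorem pgdMap_monotoneOn (hα : 0 ≤ α) (hc : 0 ≤ c) : MonotoneOn (pgdMap α c) (Ico 0 1) := by
  intro x hx y hy hxy
  have hx0 := hx.1
  exact div_le_div₀ (by positivity) (by gcongr) (sub_pos.2 hy.2) (by linarith)

theorem pgdMap_continuousAt (hx : x ≠ 1) : ContinuousAt (pgdMap α c) x :=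
  ContinuousAt.div (by fun_prop) (by fun_prop) (sub_ne_zero.2 hx.symm)

end PgdMap

/-- Core convergence claim of Theorem 1 (local convergence of PGD), abstracted:
a nonnegative sequence dominated by `f(η) = (αη² + c)/(1 − η)` and started
below the larger root `γ₀` has `limsup ≤ γ∞`, the smaller root. -/
theorem pgd_error_limsup_le (α c : ℝ) (hα : 0 < α) (hc : 0 ≤ c)
    (hsmall : 4 * (α + 1) * c ≤ 1)
    (f : ℝ → ℝ) (hf : ∀ η, f η = (α * η ^ 2 + c) / (1 - η))
    (γinf γ0 : ℝ)
    (hγinf : γinf = (1 - Real.sqrt (1 - 4 * (α + 1) * c)) / (2 * (α + 1)))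
    (hγ0 : γ0 = (1 + Real.sqrt (1 - 4 * (α + 1) * c)) / (2 * (α + 1)))
    (η : ℕ → ℝ) (hnonneg : ∀ k, 0 ≤ η k)
    (hrec : ∀ k, η (k + 1) ≤ f (η k)) (hinit : η 0 < γ0) :
    Filter.limsup η Filter.atTop ≤ γinf := by
  obtain rfl : f = pgdMap α c := funext hf
  have hA : 0 < α + 1 := by linarith
  have hq : ∀ x, (α + 1) * x ^ 2 - x + c = (α + 1) * (x - γinf) * (x - γ0) := by
    subst hγinf hγ0
    exact mul_sq_sub_add_eq_mul_sub_mul_sub hA.ne' (by linarith)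
  have hs_le : √(1 - 4 * (α + 1) * c) ≤ 1 := Real.sqrt_le_one.2 (sub_le_self _ (by positivity))
  have hγinf_le : γinf ≤ γ0 := by
    rw [hγinf, hγ0]
    gcongr
    linarith [Real.sqrt_nonneg (1 - 4 * (α + 1) * c)]
  have hγ0_lt : γ0 < 1 := by rw [hγ0, div_lt_one (by positivity)]; linarith
  set M := max (η 0) γinf
  have hM_lt : M < 1 := max_lt (hinit.trans hγ0_lt) (hγinf_le.trans_lt hγ0_lt)
  refine ((pgdMap_monotoneOn hα.le hc).mono (Icc_subset_Ico_right hM_lt)).limsup_le_of_le_map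
    (fun y hy => pgdMap_continuousAt (hy.2.trans_lt hM_lt).ne) ?_ ?_ ?_ hnonneg hrec
    (le_max_left _ _)
  · simpa [pgdMap] using hc
  · rw [pgdMap_le_self_iff hM_lt, hq]
    exact mul_nonpos_of_nonneg_of_nonpos (mul_nonneg hA.le (sub_nonneg.2 (le_max_right _ _)))
      (sub_nonpos.2 (max_le hinit.le hγinf_le))
  · intro L hL hfix
    rw [pgdMap_isFixedPt_iff (hL.2.trans_lt hM_lt), hq] at hfix
    obtain h | h : L = γinf ∨ L = γ0 := by simpa [hA.ne', sub_eq_zero] using hfix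
    · exact h.le
    · rw [h]
      exact (le_max_iff.1 (h ▸ hL.2)).resolve_left hinit.not_ge
end

section
/- Let α > 0 and define f(η) = αη²/(1 − η) for η ∈ [0,1). If a sequence (η_k) of nonnegative reals satisfies η_{k+1} ≤ f(η_k) for all k and η₀ < 1/(α+1), then η_k → 0, and moreover the convergence is quadratic in the sense that η_{k+1} ≤ (α/(1 − η₀)) η_k² for all k. -/
/-!
Below the fixed point the denominator `1 - η k` is at least `1 - η 0`, so the recursion gives
`η (k+1) ≤ c * η k ^ 2` with `c = α / (1 - η 0)` as long as `η k ≤ η 0`. Writing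
`c * η k ^ 2 = (c * η k) * η k ≤ (c * η 0) * η k`, the sequence contracts with ratio
`r = c * η 0`, and `r < 1` is exactly the basin condition `η 0 < 1 / (α + 1)`. By induction
`η k ≤ r ^ k * η 0 ≤ η 0`, which keeps the quadratic bound alive and forces `η k → 0`.
-/

open Filter

lemma mul_sq_div_one_sub_le {α x y : ℝ} (hα : 0 ≤ α) (hxy : x ≤ y) (hy : y < 1) :
    α * x ^ 2 / (1 - x) ≤ α / (1 - y) * x ^ 2 := by
  rw [div_mul_eq_mul_div]
  exact div_le_div_of_nonneg_left (by positivity) (by linarith) (by linarith)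

lemma lt_one_of_lt_one_div_add_one {α y : ℝ} (hα : 0 ≤ α) (hy : y < 1 / (α + 1)) : y < 1 :=
  hy.trans_le <| (div_le_one (by linarith)).mpr (by linarith)

lemma div_one_sub_mul_lt_one {α y : ℝ} (hα : 0 ≤ α) (hy : y < 1 / (α + 1)) :
    α / (1 - y) * y < 1 := by
  have hy1 := lt_one_of_lt_one_div_add_one hα hy
  have hmul : y * (α + 1) < 1 := (lt_div_iff₀ (by linarith)).mp hy
  rw [div_mul_eq_mul_div, div_lt_one (by linarith)]
  linarith

section QuadraticRecursion

variable {x : ℕ → ℝ} {c : ℝ}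

lemma le_pow_mul_of_le_mul_sq (hx : ∀ k, 0 ≤ x k) (hc : 0 ≤ c) (hr : c * x 0 ≤ 1)
    (hstep : ∀ k, x k ≤ x 0 → x (k + 1) ≤ c * x k ^ 2) (k : ℕ) :
    x k ≤ (c * x 0) ^ k * x 0 := by
  induction k with
  | zero => simp
  | succ k ih =>
    have hk : x k ≤ x 0 :=
      ih.trans (mul_le_of_le_one_left (hx 0) (pow_le_one₀ (mul_nonneg hc (hx 0)) hr))
    calc x (k + 1) ≤ c * x k ^ 2 := hstep k hk
      _ = (c * x k) * x k := by ring
      _ ≤ (c * x 0) * ((c * x 0) ^ k * x 0) :=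
        mul_le_mul (mul_le_mul_of_nonneg_left hk hc) ih (hx k) (mul_nonneg hc (hx 0))
      _ = (c * x 0) ^ (k + 1) * x 0 := by ring

lemma le_apply_zero_of_le_mul_sq (hx : ∀ k, 0 ≤ x k) (hc : 0 ≤ c) (hr : c * x 0 ≤ 1)
    (hstep : ∀ k, x k ≤ x 0 → x (k + 1) ≤ c * x k ^ 2) (k : ℕ) : x k ≤ x 0 :=
  (le_pow_mul_of_le_mul_sq hx hc hr hstep k).trans
    (mul_le_of_le_one_left (hx 0) (pow_le_one₀ (mul_nonneg hc (hx 0)) hr))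

lemma tendsto_zero_of_le_mul_sq (hx : ∀ k, 0 ≤ x k) (hc : 0 ≤ c) (hr : c * x 0 < 1)
    (hstep : ∀ k, x k ≤ x 0 → x (k + 1) ≤ c * x k ^ 2) : Tendsto x atTop (nhds 0) := by
  have hgeom : Tendsto (fun k ↦ (c * x 0) ^ k * x 0) atTop (nhds 0) := by
    simpa using (tendsto_pow_atTop_nhds_zero_of_lt_one
      (mul_nonneg hc (hx 0)) hr).mul_const (x 0)
  exact squeeze_zero hx (le_pow_mul_of_le_mul_sq hx hc hr.le hstep) hgeom

end QuadraticRecursion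

/-- Noiseless case of the PGD error recursion: the error converges to zero
quadratically when initialized in the basin of attraction. -/
theorem pgd_noiseless_quadratic_convergence (α : ℝ) (hα : 0 < α)
    (f : ℝ → ℝ) (hf : ∀ η, f η = α * η ^ 2 / (1 - η))
    (η : ℕ → ℝ) (hnonneg : ∀ k, 0 ≤ η k)
    (hrec : ∀ k, η (k + 1) ≤ f (η k)) (hinit : η 0 < 1 / (α + 1)) :
    Filter.Tendsto η Filter.atTop (nhds 0) ∧
      ∀ k, η (k + 1) ≤ (α / (1 - η 0)) * (η k) ^ 2 := by
  have hlt1 : η 0 < 1 := lt_one_of_lt_one_div_add_one hα.le hinit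
  have hc : 0 ≤ α / (1 - η 0) := div_nonneg hα.le (by linarith)
  have hr : α / (1 - η 0) * η 0 < 1 := div_one_sub_mul_lt_one hα.le hinit
  have hstep : ∀ k, η k ≤ η 0 → η (k + 1) ≤ α / (1 - η 0) * η k ^ 2 := fun k hk ↦
    (hrec k).trans <| (hf _).trans_le (mul_sq_div_one_sub_le hα.le hk hlt1)
  exact ⟨tendsto_zero_of_le_mul_sq hnonneg hc hr hstep,
    fun k ↦ hstep k (le_apply_zero_of_le_mul_sq hnonneg hc hr.le hstep k)⟩
end

section
/- Let α > 0, c > 0 with 4(α+1)c < 1, f(η) = (αη² + c)/(1 − η), and γ∞ the smaller fixed point. Then the derivative of f at γ∞ satisfies 0 ≤ f'(γ∞) < 1, so γ∞ is an attracting fixed point of f. -/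
/-!
At a fixed point `γ < 1` of `f η = (α η² + c) / (1 - η)`, i.e. a root of `(α + 1) γ² - γ + c`,
the quotient rule and the fixed-point equation give `1 - f'(γ) = (1 - 2 (α + 1) γ) / (1 - γ)`.
So `f'(γ) < 1` says exactly that `γ` lies left of the vertex `1 / (2 (α + 1))` of the parabola,
which is what distinguishes the smaller root: there `1 - 2 (α + 1) γ = √(1 - 4 (α + 1) c) > 0`.
-/

open Real

/-- The smaller root of `a x² - x + c`. -/
noncomputable def quadSmallerRoot (a c : ℝ) : ℝ :=
  (1 - √(1 - 4 * a * c)) / (2 * a)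

section quadSmallerRoot

variable {a c : ℝ}

lemma one_sub_two_mul_quadSmallerRoot (ha : a ≠ 0) :
    1 - 2 * a * quadSmallerRoot a c = √(1 - 4 * a * c) := by
  unfold quadSmallerRoot
  field_simp
  ring

lemma quadSmallerRoot_isRoot (ha : a ≠ 0) (hdisc : 4 * a * c ≤ 1) :
    a * quadSmallerRoot a c ^ 2 - quadSmallerRoot a c + c = 0 := by
  have hsq : √(1 - 4 * a * c) ^ 2 = 1 - 4 * a * c := sq_sqrt (by linarith)
  have hlin := one_sub_two_mul_quadSmallerRoot (c := c) ha
  have h4a : (4 : ℝ) * a ≠ 0 := by positivity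
  apply mul_left_cancel₀ h4a
  linear_combination hsq + (1 + √(1 - 4 * a * c) - 2 * a * quadSmallerRoot a c) * hlin

lemma quadSmallerRoot_pos (ha : 0 < a) (hc : 0 < c) : 0 < quadSmallerRoot a c := by
  have hsqrt : √(1 - 4 * a * c) < 1 :=
    (sqrt_lt' one_pos).2 (by nlinarith [mul_pos ha hc])
  exact div_pos (by linarith) (by positivity)

end quadSmallerRoot

section errorMap

variable {α c η : ℝ}

lemma hasDerivAt_div_one_sub (hη : η ≠ 1) :
    HasDerivAt (fun x => (α * x ^ 2 + c) / (1 - x))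
      ((α * η * (2 - η) + c) / (1 - η) ^ 2) η := by
  have hnum : HasDerivAt (fun x => α * x ^ 2 + c) (α * (2 * η)) η := by
    simpa using ((hasDerivAt_pow 2 η).const_mul α).add_const c
  have hden : HasDerivAt (fun x => 1 - x) (-1) η := by
    simpa using (hasDerivAt_id η).const_sub 1
  exact (hnum.div hden (sub_ne_zero.2 hη.symm)).congr_deriv (by ring)

lemma one_sub_deriv_of_isFixedPt (hη : η ≠ 1)
    (hfix : (α + 1) * η ^ 2 - η + c = 0) :
    1 - (α * η * (2 - η) + c) / (1 - η) ^ 2 = (1 - 2 * (α + 1) * η) / (1 - η) := by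
  have h : 1 - η ≠ 0 := sub_ne_zero.2 hη.symm
  field_simp
  linear_combination (-1 : ℝ) * hfix

end errorMap

/-- The smaller fixed point `γ∞` of the PGD error-bound map is attracting:
`0 ≤ f'(γ∞) < 1`. -/
theorem smaller_fixed_point_attracting (α c : ℝ) (hα : 0 < α) (hc : 0 < c)
    (hsmall : 4 * (α + 1) * c < 1)
    (f : ℝ → ℝ) (hf : ∀ η, f η = (α * η ^ 2 + c) / (1 - η))
    (γinf : ℝ)
    (hγinf : γinf = (1 - Real.sqrt (1 - 4 * (α + 1) * c)) / (2 * (α + 1))) :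
    0 ≤ deriv f γinf ∧ deriv f γinf < 1 := by
  obtain rfl : f = fun η => (α * η ^ 2 + c) / (1 - η) := funext hf
  change γinf = quadSmallerRoot (α + 1) c at hγinf
  have ha : α + 1 ≠ 0 := by positivity
  have hfix := hγinf ▸ quadSmallerRoot_isRoot ha hsmall.le
  have hpos : 0 < γinf := hγinf ▸ quadSmallerRoot_pos (by positivity) hc
  have hvertex : 0 < 1 - 2 * (α + 1) * γinf := by
    rw [hγinf, one_sub_two_mul_quadSmallerRoot ha]
    exact sqrt_pos.2 (by linarith)
  have hlt : γinf < 1 := by nlinarith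
  rw [(hasDerivAt_div_one_sub hlt.ne).deriv]
  refine ⟨div_nonneg (by nlinarith) (sq_nonneg _), sub_pos.1 ?_⟩
  rw [one_sub_deriv_of_isFixedPt hlt.ne hfix]
  exact div_pos hvertex (by linarith)
end

section
/- Let f(η) = (αη² + c)/(1 − η) with α > 0, c ≥ 0, 4(α+1)c < 1, and let γ∞ < γ₀ be the roots of (α+1)η² − η + c = 0. Define the sequence γ_{k+1} = f(γ_k) with γ₀' ∈ (γ∞, γ₀). Then (γ_k) is strictly decreasing and converges to γ∞. -/
/-!
Vieta's formulas factor `x - f x` as `(α + 1)(x - γ∞)(γ₀ - x)/(1 - x)` and `f x - γ∞` as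
`(x - γ∞)(α(x + γ∞) + γ∞)/(1 - x)`, so `f` maps `(γ∞, γ₀)` into itself and moves every point
strictly down. The orbit is therefore strictly decreasing and bounded below by `γ∞`; its limit
is a fixed point of `f` in `[γ∞, γ₀)`, and the only one there is `γ∞`.
-/

open Filter Set Topology

section Orbit

variable {α : Type*} {g : α → α} {p q : α} {u : ℕ → α}

theorem orbit_mem_Ioo [Preorder α] (hg : ∀ x ∈ Ioo p q, p < g x ∧ g x < x) (h0 : u 0 ∈ Ioo p q)
    (hu : ∀ k, u (k + 1) = g (u k)) (k : ℕ) : u k ∈ Ioo p q := by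
  induction k with
  | zero => exact h0
  | succ k ih =>
    rw [hu]
    exact ⟨(hg _ ih).1, (hg _ ih).2.trans ih.2⟩

theorem strictAnti_orbit [Preorder α] (hg : ∀ x ∈ Ioo p q, p < g x ∧ g x < x) (h0 : u 0 ∈ Ioo p q)
    (hu : ∀ k, u (k + 1) = g (u k)) : StrictAnti u :=
  strictAnti_nat_of_succ_lt fun k => hu k ▸ (hg _ (orbit_mem_Ioo hg h0 hu k)).2

theorem tendsto_orbit_left_endpoint [ConditionallyCompleteLinearOrder α] [TopologicalSpace α]
    [OrderTopology α] (hg : ∀ x ∈ Ioo p q, p < g x ∧ g x < x)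
    (hcont : ContinuousOn g (Ioo p q)) (h0 : u 0 ∈ Ioo p q) (hu : ∀ k, u (k + 1) = g (u k)) :
    Tendsto u atTop (𝓝 p) := by
  have hmem := orbit_mem_Ioo hg h0 hu
  have hbdd : BddBelow (range u) := ⟨p, forall_mem_range.2 fun k => (hmem k).1.le⟩
  have hlim : Tendsto u atTop (𝓝 (⨅ k, u k)) :=
    tendsto_atTop_ciInf (strictAnti_orbit hg h0 hu).antitone hbdd
  set L := ⨅ k, u k
  obtain hpL | hLp := (le_ciInf fun k => (hmem k).1.le : p ≤ L).lt_or_eq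
  · have hL : L ∈ Ioo p q := ⟨hpL, (ciInf_le hbdd 0).trans_lt h0.2⟩
    have hfix : g L = L := by
      refine tendsto_nhds_unique ?_ (hlim.comp (tendsto_add_atTop_nat 1))
      simp only [Function.comp_def, hu]
      exact (hcont.continuousAt (isOpen_Ioo.mem_nhds hL)).tendsto.comp hlim
    exact absurd hfix (hg L hL).2.ne
  · rw [hLp]
    exact hlim

end Orbit

theorem vieta_of_ne {K : Type*} [Field K] {a b c r s : K} (hrs : r ≠ s)
    (hr : a * r ^ 2 + b * r + c = 0) (hs : a * s ^ 2 + b * s + c = 0) :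
    a * (r + s) = -b ∧ a * (r * s) = c := by
  have hsum : a * (r + s) = -b := by
    have h : (r - s) * (a * (r + s) + b) = 0 := by linear_combination hr - hs
    linear_combination (mul_eq_zero.1 h).resolve_left (sub_ne_zero.2 hrs)
  exact ⟨hsum, by linear_combination r * hsum - hr⟩

section ErrorMap

variable {α c r s : ℝ} (hα : 0 < α) (hc : 0 ≤ c) (hrs : r < s)
  (hr : (α + 1) * r ^ 2 - r + c = 0) (hs : (α + 1) * s ^ 2 - s + c = 0)
include hrs hr hs

omit hα hc in
theorem vieta_errorMap_roots : (α + 1) * (r + s) = 1 ∧ (α + 1) * (r * s) = c :=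
  neg_neg (1 : ℝ) ▸ vieta_of_ne hrs.ne (by linear_combination hr) (by linear_combination hs)

include hα hc

theorem errorMap_roots_mem_Ico : 0 ≤ r ∧ s < 1 := by
  obtain ⟨hsum, hprod⟩ := vieta_errorMap_roots hrs hr hs
  have hs0 : 0 < s := by nlinarith
  have hr0 : 0 ≤ r := by
    by_contra! h
    nlinarith [mul_pos (neg_pos.2 h) hs0]
  exact ⟨hr0, by nlinarith⟩

theorem errorMap_mem_Ioo_of_mem_Ioo {x : ℝ} (hx : x ∈ Ioo r s) :
    r < (α * x ^ 2 + c) / (1 - x) ∧ (α * x ^ 2 + c) / (1 - x) < x := by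
  obtain ⟨hsum, hprod⟩ := vieta_errorMap_roots hrs hr hs
  obtain ⟨hr0, hs1⟩ := errorMap_roots_mem_Ico hα hc hrs hr hs
  have hx1 : 0 < 1 - x := by linarith [hx.2]
  have hxr : 0 < x - r := sub_pos.2 hx.1
  have hsx : 0 < s - x := sub_pos.2 hx.2
  rw [lt_div_iff₀ hx1, div_lt_iff₀ hx1]
  constructor
  · have hpos : 0 < (x - r) * (α * (x + r) + r) := mul_pos hxr (by nlinarith)
    linear_combination hpos - hr
  · have hpos : 0 < (α + 1) * ((x - r) * (s - x)) := by positivity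
    linear_combination hpos + x * hsum - hprod

end ErrorMap

theorem majorizing_sequence_converges_general (α c : ℝ) (hα : 0 < α) (hc : 0 ≤ c)
    (γinf γ0 : ℝ) (hlt : γinf < γ0)
    (hroot1 : (α + 1) * γinf ^ 2 - γinf + c = 0)
    (hroot2 : (α + 1) * γ0 ^ 2 - γ0 + c = 0)
    (f : ℝ → ℝ) (hf : ∀ η, f η = (α * η ^ 2 + c) / (1 - η))
    (γ : ℕ → ℝ) (hinit : γ 0 ∈ Set.Ioo γinf γ0)
    (hrec : ∀ k, γ (k + 1) = f (γ k)) :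
    StrictAnti γ ∧ Filter.Tendsto γ Filter.atTop (nhds γinf) := by
  have hmaps : ∀ x ∈ Ioo γinf γ0, γinf < f x ∧ f x < x := fun x hx =>
    hf x ▸ errorMap_mem_Ioo_of_mem_Ioo hα hc hlt hroot1 hroot2 hx
  have hγ0 := (errorMap_roots_mem_Ico hα hc hlt hroot1 hroot2).2
  have hcont : ContinuousOn f (Ioo γinf γ0) := by
    rw [funext hf]
    exact ContinuousOn.div (by fun_prop) (by fun_prop) fun x hx => by linarith [hx.2]
  exact ⟨strictAnti_orbit hmaps hinit hrec, tendsto_orbit_left_endpoint hmaps hcont hinit hrec⟩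

/-- The majorizing sequence of Theorem 1: iterating the error-bound map
`f(η) = (αη² + c)/(1 − η)` from any point strictly between its two fixed
points yields a strictly decreasing sequence converging to the attracting
fixed point `γ∞`. -/
theorem majorizing_sequence_converges (α c : ℝ) (hα : 0 < α) (hc : 0 ≤ c)
    (hsmall : 4 * (α + 1) * c < 1)
    (γinf γ0 : ℝ) (hlt : γinf < γ0)
    (hroot1 : (α + 1) * γinf ^ 2 - γinf + c = 0)
    (hroot2 : (α + 1) * γ0 ^ 2 - γ0 + c = 0)
    (f : ℝ → ℝ) (hf : ∀ η, f η = (α * η ^ 2 + c) / (1 - η))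
    (γ : ℕ → ℝ) (hinit : γ 0 ∈ Set.Ioo γinf γ0)
    (hrec : ∀ k, γ (k + 1) = f (γ k)) :
    StrictAnti γ ∧ Filter.Tendsto γ Filter.atTop (nhds γinf) :=
  majorizing_sequence_converges_general α c hα hc γinf γ0 hlt hroot1 hroot2 f hf γ hinit hrec
end
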